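/- Let V be a ℚ-vector space and G, H : V → V commuting linear maps each satisfying X³ = X (3-idempotents). Then the operator π = id - G² - H² + (3/2)G²H² + (1/2)GH is idempotent: π² = π. -/
import Mathlib


theorem gen {R : Type*} [Ring R] [Algebra ℚ R] (G H : R)
    (hG : G ^ 3 = G) (hH : H ^ 3 = H) (hc : G * H = H * G) :
    let π : R := 1 - G ^ 2 - H ^ 2 + (3/2 : ℚ) • (G ^ 2 * H ^ 2) + (1/2 : ℚ) • (G * H)
    π * π = π := by
  intro π
  set S := Algebra.adjoin ℚ ({G, H} : Set R) with hS
  letI : CommRing S :=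
    Algebra.adjoinCommRingOfComm ℚ (by
      rintro a (rfl | rfl) b (rfl | rfl) <;> simp_all)
  have hGm : G ∈ S := Algebra.subset_adjoin (by simp)
  have hHm : H ∈ S := Algebra.subset_adjoin (by simp)
  set g : S := ⟨G, hGm⟩
  set h : S := ⟨H, hHm⟩
  have hg : g ^ 3 = g := Subtype.ext (by push_cast; exact hG)
  have hh : h ^ 3 = h := Subtype.ext (by push_cast; exact hH)
  set q : S := 2 - 2 * g ^ 2 - 2 * h ^ 2 + 3 * (g ^ 2 * h ^ 2) + g * h with hq
  have hqq : q * q = 2 * q := by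
    rw [hq]
    linear_combination (9 * g * h^4 - 12 * g * h^2 + 4 * g + 6 * h^3 - 4 * h) * hg
      + (4 * h - 3 * g^2 * h + 2 * g) * hh
  set p : S := 1 - g ^ 2 - h ^ 2 + (3/2 : ℚ) • (g ^ 2 * h ^ 2) + (1/2 : ℚ) • (g * h) with hpdef
  have hq2 : q = (2 : ℚ) • (1 : S) - (2 : ℚ) • g ^ 2 - (2 : ℚ) • h ^ 2
      + (3 : ℚ) • (g ^ 2 * h ^ 2) + g * h := by
    rw [hq]
    simp only [Algebra.smul_def, map_ofNat, mul_one]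
  have hp2 : p = (1/2 : ℚ) • q := by
    rw [hpdef, hq2]
    match_scalars <;> norm_num
  have h2q : (2 : S) * q = (2 : ℚ) • q := by
    rw [Algebra.smul_def, map_ofNat]
  have key : p * p = p := by
    rw [hp2, smul_mul_smul_comm, hqq, h2q, smul_smul]
    norm_num
  have : ((p * p : S) : R) = ((p : S) : R) := congrArg _ key
  have hp : ((p : S) : R) = π := by
    show ((1 : S) : R) - G ^ 2 - H ^ 2 + (3/2 : ℚ) • (G ^ 2 * H ^ 2) + (1/2 : ℚ) • (G * H) = π
    norm_num [π]
  rw [MulMemClass.coe_mul, hp] at this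
  exact this

/-- for commuting linear maps `G, H` with `G³ = G` and `H³ = H`
(3-idempotents) on a ℚ-vector space, the operator
`π = id - G² - H² + (3/2)G²H² + (1/2)GH` is idempotent. -/
theorem stmt16 {V : Type*} [AddCommGroup V] [Module ℚ V]
    (G H : Module.End ℚ V)
    (hG : G ^ 3 = G) (hH : H ^ 3 = H) (hc : G * H = H * G) :
    let π : Module.End ℚ V :=
      1 - G ^ 2 - H ^ 2 + (3/2 : ℚ) • (G ^ 2 * H ^ 2) + (1/2 : ℚ) • (G * H)
    π * π = π := by
  exact gen G H hG hH hc
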